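/- Let M, N be interval modules over ℝⁿ and let {Q_i} be the connected components of I_M ∩ I_N with intervals I_{Q_i}. Define φ_x = id for x in some I_{Q_i} and φ_x = 0 otherwise. Then φ is a morphism from M to N if and only if every component Q_i is (M,N)-valid, i.e., for each x ∈ I_{Q_i}: (y ≤ x and y ∈ I_M) implies y ∈ I_N, and (z ≥ x and z ∈ I_N) implies z ∈ I_M. -/

import Mathlib

open scoped ENNReal NNReal
open Filter
noncomputable section
attribute [local instance] Classical.propDecidable
set_option linter.unusedVariables false

/-- Points of the poset ℝⁿ. The product instance gives the pointwise partial order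
and the sup-norm metric. -/
abbrev Pt (n : ℕ) := Fin n → ℝ

/-- The diagonal vector δ⃗ = (δ,...,δ). -/
def diag (n : ℕ) (δ : ℝ) : Pt n := fun _ => δ

lemma le_add_diag {n : ℕ} (x : Pt n) {δ : ℝ} (hδ : 0 ≤ δ) : x ≤ x + diag n δ :=
  fun _ => le_add_of_nonneg_right hδ

/-- A (p.f.d.-agnostic) persistence module over the poset ℝⁿ with values in
k-vector spaces: a functor from ℝⁿ to Vec. -/
structure PersMod (n : ℕ) (k : Type*) [Field k] where
  V : Pt n → Type*
  [addgrp : ∀ x, AddCommGroup (V x)]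
  [mod : ∀ x, Module k (V x)]
  ρ : ∀ {x y : Pt n}, x ≤ y → (V x →ₗ[k] V y)
  ρ_id : ∀ x : Pt n, ρ (le_refl x) = LinearMap.id
  ρ_comp : ∀ {x y z : Pt n} (h1 : x ≤ y) (h2 : y ≤ z), ρ (h1.trans h2) = (ρ h2).comp (ρ h1)

attribute [instance] PersMod.addgrp PersMod.mod

variable {n : ℕ} {k : Type*} [Field k]

/-- A morphism (natural transformation) of persistence modules. -/
structure PersHom (M N : PersMod n k) where
  app : ∀ x, M.V x →ₗ[k] N.V x
  natural : ∀ {x y : Pt n} (h : x ≤ y), (app y).comp (M.ρ h) = (N.ρ h).comp (app x)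

/-- A δ-interleaving between M and N: families φ_x : M_x → N_{x+δ⃗},
ψ_x : N_x → M_{x+δ⃗} satisfying square and triangular commutativity. -/
def PersMod.Interleaved (M N : PersMod n k) (δ : ℝ≥0) : Prop :=
  ∃ (φ : ∀ x : Pt n, M.V x →ₗ[k] N.V (x + diag n (δ : ℝ)))
    (ψ : ∀ x : Pt n, N.V x →ₗ[k] M.V (x + diag n (δ : ℝ))),
    (∀ {x y : Pt n} (h : x ≤ y),
        (φ y).comp (M.ρ h) = (N.ρ (add_le_add_left h _)).comp (φ x)) ∧
    (∀ {x y : Pt n} (h : x ≤ y),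
        (ψ y).comp (N.ρ h) = (M.ρ (add_le_add_left h _)).comp (ψ x)) ∧
    (∀ x : Pt n, M.ρ ((le_add_diag x δ.coe_nonneg).trans (le_add_diag _ δ.coe_nonneg))
        = (ψ (x + diag n (δ : ℝ))).comp (φ x)) ∧
    (∀ x : Pt n, N.ρ ((le_add_diag x δ.coe_nonneg).trans (le_add_diag _ δ.coe_nonneg))
        = (φ (x + diag n (δ : ℝ))).comp (ψ x))

/-- The interleaving distance (∞ if no interleaving exists). -/
def PersMod.dI (M N : PersMod n k) : ℝ≥0∞ :=
  ⨅ (δ : ℝ≥0) (_ : M.Interleaved N δ), (δ : ℝ≥0∞)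

/-- The diagonal shift M_{→d}. -/
def PersMod.dshift (M : PersMod n k) (d : ℝ) : PersMod n k where
  V x := M.V (x + diag n d)
  ρ h := M.ρ (add_le_add_left h _)
  ρ_id x := M.ρ_id _
  ρ_comp h1 h2 := M.ρ_comp _ _

/-- M is c-trivial: every structure map over a diagonal shift by c is zero. -/
def PersMod.DTrivial (M : PersMod n k) (c : ℝ≥0) : Prop :=
  ∀ x : Pt n, M.ρ (le_add_diag x c.coe_nonneg) = 0

/-- The 1-parameter slice of M along the diagonal line through x. -/
def PersMod.slice (M : PersMod n k) (x : Pt n) : PersMod 1 k where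
  V t := M.V (x + diag n (t 0))
  ρ {t t'} h := M.ρ (fun i => add_le_add_right (h 0) (x i))
  ρ_id t := M.ρ_id _
  ρ_comp h1 h2 := M.ρ_comp _ _

/-- δ* = sup over diagonal lines of the slice interleaving distances. -/
def deltaStar (M N : PersMod n k) : ℝ≥0∞ :=
  ⨆ x : Pt n, (M.slice x).dI (N.slice x)

/-- Finite direct sum of persistence modules. -/
def dirSum {ι : Type} [Fintype ι] (Ms : ι → PersMod n k) : PersMod n k where
  V x := ∀ i, (Ms i).V x
  ρ h := LinearMap.pi (fun i => ((Ms i).ρ h).comp (LinearMap.proj i))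
  ρ_id x := by
    apply LinearMap.ext; intro v; funext i
    simp [(Ms i).ρ_id]
  ρ_comp h1 h2 := by
    apply LinearMap.ext; intro v; funext i
    show ((Ms i).ρ (h1.trans h2)) (v i) = _
    rw [(Ms i).ρ_comp h1 h2]; rfl

/-- Zigzag reachability inside a set: p ≤ p₁ ≥ p₂ ≤ ... with all points in A. -/
def Zigzag (A : Set (Pt n)) : Pt n → Pt n → Prop :=
  Relation.ReflTransGen (fun a b => a ∈ A ∧ b ∈ A ∧ (a ≤ b ∨ b ≤ a))

/-- An interval: nonempty, order-convex, zigzag-connected. -/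
def IsPInterval (I : Set (Pt n)) : Prop :=
  I.Nonempty ∧ (∀ p ∈ I, ∀ q ∈ I, ∀ r, p ≤ r → r ≤ q → r ∈ I) ∧
    ∀ p ∈ I, ∀ q ∈ I, Zigzag I p q

/-- Q is a (zigzag-)connected component of A. -/
def IsComponent (A Q : Set (Pt n)) : Prop :=
  ∃ p ∈ A, Q = {q | Zigzag A p q}

/-- The fibre of the interval module with interval I: k on I, 0 elsewhere,
realised as a submodule of k. -/
def subOf (k : Type*) [Field k] (I : Set (Pt n)) (x : Pt n) : Submodule k k :=
  if x ∈ I then ⊤ else ⊥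

/-- The canonical map between fibres: identity within I, zero otherwise. -/
def stepFun (I : Set (Pt n)) (x y : Pt n) :
    ↥(subOf k I x) →ₗ[k] ↥(subOf k I y) where
  toFun v := ⟨if y ∈ I then (v : k) else 0, by
    by_cases hy : y ∈ I
    · rw [if_pos hy]; unfold subOf; rw [if_pos hy]; exact Submodule.mem_top
    · rw [if_neg hy]; exact Submodule.zero_mem _⟩
  map_add' a b := by
    by_cases hy : y ∈ I <;> · apply Subtype.ext; simp [hy]
  map_smul' c a := by
    by_cases hy : y ∈ I <;> · apply Subtype.ext; simp [hy]

/-- The interval module with interval I. -/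
def IntervalMod (k : Type*) [Field k] (I : Set (Pt n)) (hI : IsPInterval I) :
    PersMod n k where
  V x := ↥(subOf k I x)
  ρ {x y} _ := stepFun I x y
  ρ_id x := by
    apply LinearMap.ext; intro v
    apply Subtype.ext
    by_cases hx : x ∈ I
    · simp [stepFun, hx]
    · have hv : (v : k) = 0 := by
          have h : ∀ w : k, w ∈ subOf k I x → w = 0 := by
            intro w hw; rw [show subOf k I x = ⊥ from if_neg hx] at hw
            exact (Submodule.mem_bot k).1 hw
          exact h _ v.2
      simp [stepFun, hx, hv]
  ρ_comp {x y z} h1 h2 := by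
    apply LinearMap.ext; intro v
    apply Subtype.ext
    by_cases hz : z ∈ I
    · by_cases hy : y ∈ I
      · simp [stepFun, hy, hz]
      · have hx : x ∉ I := fun hx => hy (hI.2.1 x hx z hz y h1 h2)
        have hv : (v : k) = 0 := by
          have h : ∀ w : k, w ∈ subOf k I x → w = 0 := by
            intro w hw; rw [show subOf k I x = ⊥ from if_neg hx] at hw
            exact (Submodule.mem_bot k).1 hw
          exact h _ v.2
        simp [stepFun, hy, hz, hv]
    · simp [stepFun, hz]

/-- Lower boundary L(I). -/
def lowerBd (I : Set (Pt n)) : Set (Pt n) :=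
  {x | x ∈ closure I ∧ ∀ y : Pt n, (∀ i, y i < x i) → y ∉ I}

/-- Upper boundary U(I). -/
def upperBd (I : Set (Pt n)) : Set (Pt n) :=
  {x | x ∈ closure I ∧ ∀ y : Pt n, (∀ i, x i < y i) → y ∉ I}

/-- Diagonal distance dl(x, A): the infimum of sup-norm distances from x to
points of A along the diagonal line Δ_x, ∞ when Δ_x ∩ A = ∅. -/
def dl (x : Pt n) (A : Set (Pt n)) : ℝ≥0∞ :=
  ⨅ (α : ℝ) (_ : x + diag n α ∈ A), ENNReal.ofReal |α|

/-- d_triv^{(M,N)}(x) = max(dl(x,U(I_M))/2, dl(x,L(I_N))/2). -/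
def dtriv (IM IN : Set (Pt n)) (x : Pt n) : ℝ≥0∞ :=
  max (dl x (upperBd IM) / 2) (dl x (lowerBd IN) / 2)

/-- An intersection component with interval Q is δ_{(M,N)}-trivializable. -/
def Trivializable (IM IN Q : Set (Pt n)) (δ : ℝ≥0∞) : Prop :=
  ∀ x ∈ Q, dtriv IM IN x < δ

/-- (M,N)-validity of an intersection component with interval Q. -/
def MNValid (IM IN Q : Set (Pt n)) : Prop :=
  ∀ x ∈ Q, (∀ y : Pt n, y ≤ x → y ∈ IM → y ∈ IN) ∧
    (∀ z : Pt n, x ≤ z → z ∈ IN → z ∈ IM)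

/-- The interval of the shifted module N_{→d}. -/
def shiftSet (I : Set (Pt n)) (d : ℝ) : Set (Pt n) := {x | x + diag n d ∈ I}

/-- A vertex of (the boundary of) a set: a boundary point through which no
nontrivial line segment of the boundary passes. -/
def IsVertex (I : Set (Pt n)) (x : Pt n) : Prop :=
  x ∈ frontier I ∧
    ¬ ∃ v : Pt n, v ≠ 0 ∧ ∃ ε > (0:ℝ), ∀ t : ℝ, |t| < ε → x + t • v ∈ frontier I

/-- An axis-aligned (possibly degenerate) rectangle. -/
def IsRect (R : Set (Pt n)) : Prop := ∃ a b : Pt n, a ≤ b ∧ R = Set.Icc a b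

/-- A discretely presented interval: a finite union of rectangles. -/
def DiscPresented (I : Set (Pt n)) : Prop :=
  ∃ F : Finset (Set (Pt n)), (∀ R ∈ F, IsRect R) ∧ I = ⋃ R ∈ F, (R : Set (Pt n))

/-- f is a facet of I orthogonal to direction i: contained in a hyperplane
{y_i = c}, contained in the lower or upper boundary, and (n−1)-dimensional
(contains a full hyperplane patch around one of its points). -/
def IsFacetDir (I : Set (Pt n)) (f : Set (Pt n)) (i : Fin n) : Prop :=
  ∃ c : ℝ, f ⊆ {y | y i = c} ∧ (f ⊆ lowerBd I ∨ f ⊆ upperBd I) ∧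
    ∃ z ∈ f, ∃ ε > (0:ℝ), ∀ y : Pt n, y i = c → dist y z < ε → y ∈ f

/-- The set D(x) of the four diagonal boundary distances. -/
def candD (IM IN : Set (Pt n)) (x : Pt n) : Set ℝ≥0∞ :=
  {dl x (lowerBd IM), dl x (lowerBd IN), dl x (upperBd IM), dl x (upperBd IN)}

/-- The candidate set S. -/
def candS (IM IN : Set (Pt n)) : Set ℝ≥0∞ :=
  {d | ∃ x : Pt n, (IsVertex IM x ∨ IsVertex IN x) ∧
    (d ∈ candD IM IN x ∨ 2 * d ∈ candD IM IN x)}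

/-- One-sided limit lim_{ε→0+} f(x − ε v) (junk value if the limit fails to exist). -/
def dlim (f : Pt n → ℤ) (x v : Pt n) : ℤ :=
  limUnder (nhdsWithin (0:ℝ) (Set.Ioi 0)) (fun ε : ℝ => f (x - ε • v))

/-- The indicator vector Σ_{i ∈ s} e_i. -/
def basisVec (n : ℕ) (s : Finset (Fin n)) : Pt n := fun i => if i ∈ s then 1 else 0

/-- The differential Δf(x) = Σ_k (−1)^k Σ_{|s|=k} lim_{ε→0+} f(x − ε Σ_{i∈s} e_i). -/
def diffl (f : Pt n → ℤ) (x : Pt n) : ℤ :=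
  ∑ s : Finset (Fin n), (-1 : ℤ) ^ s.card * dlim f x (basisVec n s)

/-- Right continuity of f : ℝⁿ → ℤ. -/
def RightCont (f : Pt n → ℤ) : Prop :=
  ∀ x : Pt n, Filter.Tendsto f (nhdsWithin x (Set.Ici x)) (nhds (f x))

/-- A nice function: right continuous, finitely supported differential,
support bounded below. -/
def NiceFn (f : Pt n → ℤ) : Prop :=
  RightCont f ∧ {x | diffl f x ≠ 0}.Finite ∧ ∃ a : ℝ, ∀ x, f x ≠ 0 → ∀ i, a ≤ x i

/-- Positive part Δf₊. -/
def difflp (f : Pt n → ℤ) (x : Pt n) : ℤ := max (diffl f x) 0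
/-- Negative part Δf₋. -/
def difflm (f : Pt n → ℤ) (x : Pt n) : ℤ := min (diffl f x) 0

/-- Σ_{y ≤ x} g(y), as a finite sum over the support. -/
def sumLe (g : Pt n → ℤ) (x : Pt n) : ℤ := ∑ᶠ y ∈ {y : Pt n | y ≤ x}, g y

/-- The δ-extension f^{+δ}(x) = f_{Σ+}(x+δ⃗) + f_{Σ−}(x−δ⃗). -/
def extend (f : Pt n → ℤ) (δ : ℝ) (x : Pt n) : ℤ :=
  sumLe (difflp f) (x + diag n δ) + sumLe (difflm f) (x - diag n δ)

/-- The δ-shrinking f^{−δ}(x) = f_{Σ−}(x+δ⃗) + f_{Σ+}(x−δ⃗). -/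
def shrink (f : Pt n → ℤ) (δ : ℝ) (x : Pt n) : ℤ :=
  sumLe (difflm f) (x + diag n δ) + sumLe (difflp f) (x - diag n δ)

/-- d₊(f,g) = inf{δ : f ≤ g^{+δ}, g ≤ f^{+δ}}. -/
def dplus (f g : Pt n → ℤ) : ℝ≥0∞ :=
  ⨅ (δ : ℝ≥0) (_ : (∀ x, f x ≤ extend g δ x) ∧ (∀ x, g x ≤ extend f δ x)), (δ : ℝ≥0∞)

/-- d₋(f,g) = inf{δ : f ≥ g^{−δ}, g ≥ f^{−δ}}. -/
def dminus (f g : Pt n → ℤ) : ℝ≥0∞ :=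
  ⨅ (δ : ℝ≥0) (_ : (∀ x, shrink g δ x ≤ f x) ∧ (∀ x, shrink f δ x ≤ g x)), (δ : ℝ≥0∞)

/-- The dimension distance d₀ = min(d₋, d₊). -/
def d0 (f g : Pt n → ℤ) : ℝ≥0∞ := min (dminus f g) (dplus f g)

/-- The dimension function dm M(x) = dim M_x (as an integer). -/
def dmFun (M : PersMod n k) : Pt n → ℤ := fun x => (Module.finrank k (M.V x) : ℤ)

/-- A nice persistence module: all structure maps over sufficiently small
diagonal shifts are injective or surjective. -/
def PersMod.Nice (M : PersMod n k) : Prop :=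
  ∃ ε₀ > (0:ℝ), ∀ ε : ℝ, ∀ h0 : 0 < ε, ε < ε₀ → ∀ x : Pt n,
    Function.Injective (M.ρ (le_add_diag x h0.le)) ∨
      Function.Surjective (M.ρ (le_add_diag x h0.le))

/-- Composition ρ_i ∘ ... ∘ ρ₁ of a chain of linear maps. -/
def chainComp {K : Type*} [Field K] (V : ℕ → Type*) [∀ i, AddCommGroup (V i)]
    [∀ i, Module K (V i)] (ρ : ∀ i, V i →ₗ[K] V (i+1)) : ∀ i, V 0 →ₗ[K] V i
  | 0 => LinearMap.id
  | (i+1) => (ρ i).comp (chainComp V ρ i)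


/-- The family φ with φ_x = id on each intersection component (i.e. on
I_M ∩ I_N) and φ_x = 0 elsewhere, as maps between interval-module fibres. -/
def crossMap {n : ℕ} {k : Type*} [Field k] (IM IN : Set (Pt n)) (x : Pt n) :
    ↥(subOf k IM x) →ₗ[k] ↥(subOf k IN x) where
  toFun v := ⟨if x ∈ IN then (v : k) else 0, by
    by_cases hx : x ∈ IN
    · rw [if_pos hx]; unfold subOf; rw [if_pos hx]; exact Submodule.mem_top
    · rw [if_neg hx]; exact Submodule.zero_mem _⟩
  map_add' a b := by
    by_cases hx : x ∈ IN <;> · apply Subtype.ext; simp [hx]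
  map_smul' c a := by
    by_cases hx : x ∈ IN <;> · apply Subtype.ext; simp [hx]

/-! Both conditions are pointwise. The naturality square of `crossMap` at `x ≤ y` only
compares the scalars `[y ∈ I_M]` and `[x ∈ I_N]` on the corner `x ∈ I_M`, `y ∈ I_N`; and since
the components of `I_M ∩ I_N` cover it, validity of every component is validity at every
point of `I_M ∩ I_N`. Both reduce to: for `x ≤ y` with `x ∈ I_M`, `y ∈ I_N`,
`y ∈ I_M ↔ x ∈ I_N`. -/

section IntervalFibres

variable {I IM IN : Set (Pt n)} {x y : Pt n}

lemma one_mem_subOf (hx : x ∈ I) : (1 : k) ∈ subOf k I x := by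
  simp [subOf, hx]

lemma eq_zero_of_mem_subOf (hx : x ∉ I) {w : k} (hw : w ∈ subOf k I x) : w = 0 := by
  unfold subOf at hw
  rwa [if_neg hx, Submodule.mem_bot] at hw

lemma coe_stepFun_apply (v : subOf k I x) :
    (stepFun I x y v : k) = if y ∈ I then (v : k) else 0 := rfl

lemma coe_crossMap_apply (v : subOf k IM x) :
    (crossMap IM IN x v : k) = if x ∈ IN then (v : k) else 0 := rfl

lemma crossMap_comp_stepFun_eq_iff :
    (crossMap (k := k) IM IN y).comp (stepFun IM x y)
        = (stepFun IN x y).comp (crossMap IM IN x) ↔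
      (x ∈ IM → y ∈ IN → (y ∈ IM ↔ x ∈ IN)) := by
  constructor
  · intro hcomm hxM hyN
    have h1 := congrArg Subtype.val
      (LinearMap.congr_fun hcomm ⟨1, one_mem_subOf (k := k) hxM⟩)
    simp only [LinearMap.comp_apply, coe_crossMap_apply, coe_stepFun_apply, if_pos hyN] at h1
    by_cases hyM : y ∈ IM <;> by_cases hxN : x ∈ IN <;> simp_all
  · intro hcross
    ext v
    simp only [LinearMap.comp_apply, coe_crossMap_apply, coe_stepFun_apply]
    by_cases hxM : x ∈ IM
    · by_cases hyN : y ∈ IN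
      · simp [hyN, hcross hxM hyN]
      · simp [hyN]
    · simp [eq_zero_of_mem_subOf hxM v.2]

end IntervalFibres

section Components

variable {A Q : Set (Pt n)}

lemma Zigzag.mem_right {p q : Pt n} (h : Zigzag A p q) (hp : p ∈ A) : q ∈ A := by
  rcases Relation.ReflTransGen.cases_tail h with rfl | ⟨_, _, hstep⟩
  exacts [hp, hstep.2.1]

lemma IsComponent.subset (hQ : IsComponent A Q) : Q ⊆ A := by
  obtain ⟨p, hp, rfl⟩ := hQ
  exact fun _ hq => Zigzag.mem_right hq hp

lemma forall_isComponent_forall_mem_iff {P : Pt n → Prop} :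
    (∀ Q, IsComponent A Q → ∀ x ∈ Q, P x) ↔ ∀ x ∈ A, P x :=
  ⟨fun h x hx => h _ ⟨x, hx, rfl⟩ x Relation.ReflTransGen.refl,
    fun h _ hQ x hx => h x (hQ.subset hx)⟩

end Components

section Validity

variable {IM IN : Set (Pt n)}

theorem crossMap_natural_iff (hM : IsPInterval IM) (hN : IsPInterval IN) :
    (∀ {x y : Pt n} (h : x ≤ y),
        (crossMap (k := k) IM IN y).comp ((IntervalMod k IM hM).ρ h)
          = ((IntervalMod k IN hN).ρ h).comp (crossMap (k := k) IM IN x)) ↔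
      ∀ x y : Pt n, x ≤ y → x ∈ IM → y ∈ IN → (y ∈ IM ↔ x ∈ IN) :=
  ⟨fun h x y hxy => crossMap_comp_stepFun_eq_iff.1 (h hxy),
    fun h x y hxy => crossMap_comp_stepFun_eq_iff.2 (h x y hxy)⟩

theorem forall_isComponent_mnValid_iff :
    (∀ Q : Set (Pt n), IsComponent (IM ∩ IN) Q → MNValid IM IN Q) ↔
      ∀ x y : Pt n, x ≤ y → x ∈ IM → y ∈ IN → (y ∈ IM ↔ x ∈ IN) := by
  unfold MNValid
  rw [forall_isComponent_forall_mem_iff]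
  constructor
  · intro hval x y hxy hxM hyN
    exact ⟨fun hyM => (hval y ⟨hyM, hyN⟩).1 x hxy hxM,
      fun hxN => (hval x ⟨hxM, hxN⟩).2 y hxy hyN⟩
  · intro hcross x hx
    exact ⟨fun y hyx hyM => (hcross y x hyx hyM hx.2).1 hx.1,
      fun z hxz hzN => (hcross x z hxz hx.1 hzN).2 hx.2⟩

end Validity

/-- the family φ (identity on each component of I_M ∩ I_N, zero
elsewhere) is a morphism of interval modules iff every intersection component
is (M,N)-valid. -/
theorem stmt2 {n : ℕ} {k : Type*} [Field k] (IM IN : Set (Pt n))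
    (hM : IsPInterval IM) (hN : IsPInterval IN) :
    (∀ {x y : Pt n} (h : x ≤ y),
        (crossMap (k := k) IM IN y).comp ((IntervalMod k IM hM).ρ h)
          = ((IntervalMod k IN hN).ρ h).comp (crossMap (k := k) IM IN x)) ↔
    (∀ Q : Set (Pt n), IsComponent (IM ∩ IN) Q → MNValid IM IN Q) :=
  (crossMap_natural_iff hM hN).trans forall_isComponent_mnValid_iff.symm

end
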